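/- Let c : I → ℝ⁴ be a C² curve and λ : I → ℝ a C¹ function satisfying the sub-Riemannian Euler–Lagrange system ẍ₁ = λ̇x₂ + 2λẋ₂, ẍ₂ = −λ̇x₁ − 2λẋ₁, ẍ₃ = −λ̇x₄ − 2λẋ₄, ẍ₄ = λ̇x₃ + 2λẋ₃. Then: (1) β̇(s) = −2λ(s)γ(s) and γ̇(s) = 2λ(s)β(s) for all s, and consequently β² + γ² (the square of the sub-Riemannian speed) is constant along c; (2) if moreover c lies on H and is horizontal with respect to span{X,Y} (α ≡ 0), then the multiplier λ is constant on I. -/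

import Mathlib

/-!
The Euler–Lagrange system reads `c̈ = -(λ̇ T(c) + 2λ T(ċ))`. Since `T`, `X`, `Y` are skew-adjoint
for `⟨·,·⟩`, with `⟨T u, X w⟩ = ⟨u, Y w⟩` and `⟨T u, Y w⟩ = -⟨u, X w⟩`, differentiating gives
`β̇ = -2λγ`, `γ̇ = 2λβ`: the pair `(β, γ)` rotates, so `β² + γ²` is a first integral. Likewise,
`T` being an isometry, `α̇ = -λ̇⟨c,c⟩ - λ (d/ds)⟨c,c⟩`, so `α + λ⟨c,c⟩` is a first integral; on a
horizontal curve in `H` it equals `-λ`.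
-/

open Real Set

noncomputable section

/-- Pseudo-Euclidean inner product of signature (2,2) on ℝ⁴. -/
def ip (x y : Fin 4 → ℝ) : ℝ :=
  -(x 0 * y 0) - x 1 * y 1 + x 2 * y 2 + x 3 * y 3

/-- Anti-de Sitter space H = {x : ⟨x,x⟩ = -1}. -/
def AdS : Set (Fin 4 → ℝ) := {x | ip x x = -1}

/-- The vector field T(x) = (−x₂, x₁, x₄, −x₃). -/
def Tf (x : Fin 4 → ℝ) : Fin 4 → ℝ := ![-(x 1), x 0, x 3, -(x 2)]

/-- The vector field X(x) = (x₃, x₄, x₁, x₂). -/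
def Xf (x : Fin 4 → ℝ) : Fin 4 → ℝ := ![x 2, x 3, x 0, x 1]

/-- The vector field Y(x) = (x₄, −x₃, −x₂, x₁). -/
def Yf (x : Fin 4 → ℝ) : Fin 4 → ℝ := ![x 3, -(x 2), -(x 1), x 0]

/-- The normal vector field N(x) = x. -/
def Nf (x : Fin 4 → ℝ) : Fin 4 → ℝ := x

/-- α(s) = ⟨ċ(s), T(c(s))⟩. -/
def alphaC (c : ℝ → Fin 4 → ℝ) (s : ℝ) : ℝ := ip (deriv c s) (Tf (c s))

/-- β(s) = ⟨ċ(s), X(c(s))⟩. -/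
def betaC (c : ℝ → Fin 4 → ℝ) (s : ℝ) : ℝ := ip (deriv c s) (Xf (c s))

/-- γ(s) = ⟨ċ(s), Y(c(s))⟩. -/
def gammaC (c : ℝ → Fin 4 → ℝ) (s : ℝ) : ℝ := ip (deriv c s) (Yf (c s))

theorem Convex.eq_of_hasDerivWithinAt_eq_zero {E : Type*} [NormedAddCommGroup E]
    [NormedSpace ℝ E] {I : Set ℝ} {f : ℝ → E} (hI : Convex ℝ I)
    (hf : ∀ x ∈ I, HasDerivWithinAt f 0 I x) {s t : ℝ} (hs : s ∈ I) (ht : t ∈ I) :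
    f s = f t := by
  simpa [sub_eq_zero, eq_comm] using
    hI.norm_image_sub_le_of_norm_hasDerivWithin_le hf (fun _ _ => norm_zero.le) hs ht

theorem HasDerivAt.ip {f g : ℝ → Fin 4 → ℝ} {f' g' : Fin 4 → ℝ} {s : ℝ}
    (hf : HasDerivAt f f' s) (hg : HasDerivAt g g' s) :
    HasDerivAt (fun t => ip (f t) (g t)) (ip f' (g s) + ip (f s) g') s := by
  have hfi (i : Fin 4) := hasDerivAt_pi.1 hf i
  have hgi (i : Fin 4) := hasDerivAt_pi.1 hg i
  exact ((((((hfi 0).fun_mul (hgi 0)).fun_neg.fun_sub ((hfi 1).fun_mul (hgi 1))).fun_add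
    ((hfi 2).fun_mul (hgi 2))).fun_add ((hfi 3).fun_mul (hgi 3)))).congr_deriv
    (by simp only [_root_.ip]; ring)

theorem HasDerivAt.Tf {f : ℝ → Fin 4 → ℝ} {f' : Fin 4 → ℝ} {s : ℝ} (hf : HasDerivAt f f' s) :
    HasDerivAt (fun t => Tf (f t)) (Tf f') s := by
  refine hasDerivAt_pi.2 fun i => ?_
  fin_cases i <;> simp [_root_.Tf, hasDerivAt_pi.1 hf, (hasDerivAt_pi.1 hf _).fun_neg]

theorem HasDerivAt.Xf {f : ℝ → Fin 4 → ℝ} {f' : Fin 4 → ℝ} {s : ℝ} (hf : HasDerivAt f f' s) :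
    HasDerivAt (fun t => Xf (f t)) (Xf f') s := by
  refine hasDerivAt_pi.2 fun i => ?_
  fin_cases i <;> simp [_root_.Xf, hasDerivAt_pi.1 hf]

theorem HasDerivAt.Yf {f : ℝ → Fin 4 → ℝ} {f' : Fin 4 → ℝ} {s : ℝ} (hf : HasDerivAt f f' s) :
    HasDerivAt (fun t => Yf (f t)) (Yf f') s := by
  refine hasDerivAt_pi.2 fun i => ?_
  fin_cases i <;> simp [_root_.Yf, hasDerivAt_pi.1 hf, (hasDerivAt_pi.1 hf _).fun_neg]

theorem eq_neg_Tf_of_eulerLagrange {a x v : Fin 4 → ℝ} {L L' : ℝ}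
    (h0 : a 0 = L' * x 1 + 2 * L * v 1) (h1 : a 1 = -(L' * x 0) - 2 * L * v 0)
    (h2 : a 2 = -(L' * x 3) - 2 * L * v 3) (h3 : a 3 = L' * x 2 + 2 * L * v 2) :
    a = -(L' • Tf x + (2 * L) • Tf v) := by
  ext i
  fin_cases i <;>
    simp only [Tf, h0, h1, h2, h3, Fin.zero_eta, Fin.mk_one, Fin.reduceFinMk, Fin.isValue,
      Pi.neg_apply, Pi.add_apply, Pi.smul_apply, smul_eq_mul, Matrix.cons_val_zero,
      Matrix.cons_val_one, Matrix.cons_val] <;>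
    ring

section EulerLagrange

variable {c : ℝ → Fin 4 → ℝ} {lam : ℝ → ℝ} {s L L' : ℝ}

theorem hasDerivAt_betaC (hc : HasDerivAt c (deriv c s) s)
    (hc' : HasDerivAt (deriv c) (-(L' • Tf (c s) + (2 * L) • Tf (deriv c s))) s) :
    HasDerivAt (betaC c) (-2 * L * gammaC c s) s :=
  (hc'.ip hc.Xf).congr_deriv <| by
    simp only [ip, Tf, Xf, Yf, gammaC, Pi.neg_apply, Pi.add_apply, Pi.smul_apply, smul_eq_mul,
      Matrix.cons_val_zero, Matrix.cons_val_one, Matrix.cons_val]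
    ring

theorem hasDerivAt_gammaC (hc : HasDerivAt c (deriv c s) s)
    (hc' : HasDerivAt (deriv c) (-(L' • Tf (c s) + (2 * L) • Tf (deriv c s))) s) :
    HasDerivAt (gammaC c) (2 * L * betaC c s) s :=
  (hc'.ip hc.Yf).congr_deriv <| by
    simp only [ip, Tf, Xf, Yf, betaC, Pi.neg_apply, Pi.add_apply, Pi.smul_apply, smul_eq_mul,
      Matrix.cons_val_zero, Matrix.cons_val_one, Matrix.cons_val]
    ring

theorem hasDerivAt_betaC_sq_add_gammaC_sq (hc : HasDerivAt c (deriv c s) s)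
    (hc' : HasDerivAt (deriv c) (-(L' • Tf (c s) + (2 * L) • Tf (deriv c s))) s) :
    HasDerivAt (fun t => betaC c t ^ 2 + gammaC c t ^ 2) 0 s :=
  (((hasDerivAt_betaC hc hc').pow 2).add ((hasDerivAt_gammaC hc hc').pow 2)).congr_deriv
    (by ring)

theorem hasDerivAt_alphaC_add_mul_ip (hc : HasDerivAt c (deriv c s) s)
    (hlam : HasDerivAt lam L' s)
    (hc' : HasDerivAt (deriv c) (-(L' • Tf (c s) + (2 * lam s) • Tf (deriv c s))) s) :
    HasDerivAt (fun t => alphaC c t + lam t * ip (c t) (c t)) 0 s :=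
  ((hc'.ip hc.Tf).add (hlam.mul (hc.ip hc))).congr_deriv <| by
    simp only [ip, Tf, Pi.neg_apply, Pi.add_apply, Pi.smul_apply, smul_eq_mul, Matrix.cons_val_zero,
      Matrix.cons_val_one, Matrix.cons_val]
    ring

end EulerLagrange

/-- along a C² solution of the sub-Riemannian Euler–Lagrange system
ẍ₁ = λ̇x₂ + 2λẋ₂, ẍ₂ = −λ̇x₁ − 2λẋ₁, ẍ₃ = −λ̇x₄ − 2λẋ₄, ẍ₄ = λ̇x₃ + 2λẋ₃:
(1) β̇ = −2λγ and γ̇ = 2λβ, hence β² + γ² is constant;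
(2) if the curve lies on AdS and is horizontal for span{X,Y} (α ≡ 0), then λ is
constant on I. -/
theorem subRiemannian_euler_lagrange (I : Set ℝ) (hI : I.OrdConnected)
    (c : ℝ → Fin 4 → ℝ) (lam : ℝ → ℝ)
    (hc1 : ∀ s ∈ I, DifferentiableAt ℝ c s)
    (hc2 : ∀ s ∈ I, DifferentiableAt ℝ (deriv c) s)
    (hlam : ∀ s ∈ I, DifferentiableAt ℝ lam s)
    (hEL1 : ∀ s ∈ I, deriv (deriv c) s 0
      = deriv lam s * c s 1 + 2 * lam s * deriv c s 1)
    (hEL2 : ∀ s ∈ I, deriv (deriv c) s 1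
      = -(deriv lam s * c s 0) - 2 * lam s * deriv c s 0)
    (hEL3 : ∀ s ∈ I, deriv (deriv c) s 2
      = -(deriv lam s * c s 3) - 2 * lam s * deriv c s 3)
    (hEL4 : ∀ s ∈ I, deriv (deriv c) s 3
      = deriv lam s * c s 2 + 2 * lam s * deriv c s 2) :
    ((∀ s ∈ I, deriv (betaC c) s = -2 * lam s * gammaC c s ∧
        deriv (gammaC c) s = 2 * lam s * betaC c s) ∧
      (∀ s ∈ I, ∀ t ∈ I,
        (betaC c s)^2 + (gammaC c s)^2 = (betaC c t)^2 + (gammaC c t)^2)) ∧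
    ((∀ s ∈ I, c s ∈ AdS) → (∀ s ∈ I, alphaC c s = 0) →
      ∀ s ∈ I, ∀ t ∈ I, lam s = lam t) := by
  have hc (s) (hs : s ∈ I) := (hc1 s hs).hasDerivAt
  have hc' (s) (hs : s ∈ I) : HasDerivAt (deriv c)
      (-(deriv lam s • Tf (c s) + (2 * lam s) • Tf (deriv c s))) s :=
    eq_neg_Tf_of_eulerLagrange (hEL1 s hs) (hEL2 s hs) (hEL3 s hs) (hEL4 s hs) ▸
      (hc2 s hs).hasDerivAt
  refine ⟨⟨fun s hs => ⟨(hasDerivAt_betaC (hc s hs) (hc' s hs)).deriv,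
      (hasDerivAt_gammaC (hc s hs) (hc' s hs)).deriv⟩, fun s hs t ht => ?_⟩, ?_⟩
  · exact hI.convex.eq_of_hasDerivWithinAt_eq_zero
      (fun x hx => (hasDerivAt_betaC_sq_add_gammaC_sq (hc x hx) (hc' x hx)).hasDerivWithinAt) hs ht
  · intro hAdS hhor s hs t ht
    have hconst := hI.convex.eq_of_hasDerivWithinAt_eq_zero (fun x hx =>
      (hasDerivAt_alphaC_add_mul_ip (hc x hx) (hlam x hx).hasDerivAt (hc' x hx)).hasDerivWithinAt)
      hs ht
    simpa [hhor s hs, hhor t ht, show ip (c s) (c s) = -1 from hAdS s hs,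
      show ip (c t) (c t) = -1 from hAdS t ht] using hconst
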